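/- arXiv:1712.08112 — 4 statements merged into one kernel-verified Lean document; each statement's English description precedes it below -/
import Mathlib

section
/- Let F be a field, let E be an algebraic Galois field extension of F, and let v and w be absolute values on E. Equip the Galois group Gal(E/F) with the Krull topology, and let S = {σ ∈ Gal(E/F) : |σ(x)|_w = |x|_v for all x ∈ E}, with the subspace topology. Each σ ∈ S is an isometry from (E, |·|_v) to (E, |·|_w) and hence extends uniquely to a continuous map ψ_σ : E_v → E_w between the completions. Then the map ψ : S × E_v → E_w defined by ψ(σ, α) = ψ_σ(α) is continuous. -/
/-!
Every `σ ∈ S` is an isometry `(E, v) → (E, w)`, so `ψ_σ` is the completion of that isometry and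
the family `(ψ_σ)_σ` is equicontinuous. Joint continuity therefore reduces to continuity in `σ`
at the points of the dense subset `E ⊆ E_v`, and there `σ ↦ σ x` is even locally constant: it is
constant on cosets of `Gal(E/F(x))`, which is open in the Krull topology since `F(x)/F` is finite.
-/

open Filter Topology Function UniformSpace

theorem EquicontinuousAt.continuousAt_uncurry_of_dense {ι X α : Type*} [TopologicalSpace ι]
    [TopologicalSpace X] [PseudoMetricSpace α] {F : ι → X → α} {x₀ : X}
    (hF : EquicontinuousAt F x₀) {s : Set X} (hs : Dense s) {i₀ : ι}
    (hcont : ∀ x ∈ s, ContinuousAt (F · x) i₀) :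
    ContinuousAt (uncurry F) (i₀, x₀) := by
  refine Metric.tendsto_nhds.mpr fun ε hε => ?_
  have hnear := Metric.equicontinuousAt_iff_right.mp hF (ε / 4) (by positivity)
  obtain ⟨x, hxs, hx⟩ := hs.inter_nhds_nonempty hnear
  have hFx := Metric.tendsto_nhds.mp (hcont x hxs) (ε / 4) (by positivity)
  filter_upwards [hFx.prod_nhds hnear] with ⟨i, y⟩ ⟨hi, hy⟩
  have hy' := hy i
  have hx' := hx i₀
  rw [dist_comm] at hy' hx'
  calc dist (F i y) (F i₀ x₀)
      ≤ dist (F i y) (F i x₀) + dist (F i x₀) (F i x) + dist (F i x) (F i₀ x)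
        + dist (F i₀ x) (F i₀ x₀) :=
        (dist_triangle _ (F i₀ x) _).trans (add_le_add_left (dist_triangle4 _ _ _ _) _)
    _ < ε := by linarith [hx i]

theorem Equicontinuous.continuous_uncurry_of_denseRange {ι X Y α : Type*} [TopologicalSpace ι]
    [TopologicalSpace X] [PseudoMetricSpace α] {F : ι → X → α} (hF : Equicontinuous F)
    {j : Y → X} (hj : DenseRange j) (hcont : ∀ y, Continuous (F · (j y))) :
    Continuous (uncurry F) :=
  continuous_iff_continuousAt.mpr fun ⟨_, x₀⟩ => (hF x₀).continuousAt_uncurry_of_dense hj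
    (by rintro _ ⟨y, rfl⟩; exact (hcont y).continuousAt)

theorem AlgEquiv.isLocallyConstant_apply {K L : Type*} [Field K] [Field L] [Algebra K L]
    [Algebra.IsIntegral K L] (x : L) : IsLocallyConstant fun σ : Gal(L/K) => σ x := by
  refine (IsLocallyConstant.iff_eventually_eq _).mpr fun σ => ?_
  have hopen : IsOpen {τ : Gal(L/K) | σ⁻¹ * τ ∈ MulAction.stabilizer Gal(L/K) x} :=
    (stabilizer_isOpen_of_isIntegral x).preimage (continuous_const.mul continuous_id)
  filter_upwards [hopen.mem_nhds (by simp)] with τ hτ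
  simpa [AlgEquiv.symm_apply_eq] using hτ

theorem WithAbs.isometry_map {R T : Type*} [Ring R] [Ring T] {v : AbsoluteValue R ℝ}
    {w : AbsoluteValue T ℝ} {f : R →+* T} (hf : ∀ x, w (f x) = v x) :
    Isometry (WithAbs.map v w f) :=
  Isometry.of_dist_eq fun x y => by
    rw [dist_eq_norm, dist_eq_norm, ← map_sub]
    exact hf _

theorem sContinuity_general {F E : Type*} [Field F] [Field E] [Algebra F E]
    [Algebra.IsAlgebraic F E]
    (v w : AbsoluteValue E ℝ)
    (Ψ : {σ : E ≃ₐ[F] E // ∀ x : E, w (σ x) = v x} → v.Completion → w.Completion)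
    (hΨcont : ∀ σ, Continuous (Ψ σ))
    (hΨext : ∀ σ (x : E),
      Ψ σ (((WithAbs.equiv v).symm x : WithAbs v) : v.Completion)
        = (((WithAbs.equiv w).symm (σ.1 x) : WithAbs w) : w.Completion)) :
    Continuous fun p : {σ : E ≃ₐ[F] E // ∀ x : E, w (σ x) = v x} × v.Completion =>
      Ψ p.1 p.2 := by
  have hΨ_eq_map : ∀ σ, Ψ σ = Completion.map (WithAbs.map v w σ.1.toRingHom) := fun σ =>
    Completion.ext (hΨcont σ) Completion.continuous_map fun x => by
      rw [Completion.map_coe (WithAbs.isometry_map σ.2).uniformContinuous]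
      exact hΨext σ x.ofAbs
  have hΨ_isometry : ∀ σ, Isometry (Ψ σ) := fun σ =>
    hΨ_eq_map σ ▸ (WithAbs.isometry_map σ.2).completion_map
  refine (LipschitzWith.uniformEquicontinuous Ψ 1 fun σ => (hΨ_isometry σ).lipschitz)
    |>.equicontinuous.continuous_uncurry_of_denseRange Completion.denseRange_coe fun x => ?_
  have hΨ_coe : (Ψ · x) = fun σ => ((WithAbs.toAbs w (σ.1 x.ofAbs) : WithAbs w) : w.Completion) :=
    funext fun σ => hΨext σ x.ofAbs
  rw [hΨ_coe]
  exact ((AlgEquiv.isLocallyConstant_apply (K := F) x.ofAbs).comp_continuous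
    continuous_subtype_val |>.comp fun y : E =>
      ((WithAbs.toAbs w y : WithAbs w) : w.Completion)).continuous

/-- Lemma `SContinuity`: Let `E/F` be a Galois extension, `v, w` absolute
values on `E`, and `S = {σ ∈ Gal(E/F) : |σ x|_w = |x|_v for all x}` (with the subspace
topology of the Krull topology).  Each `σ ∈ S` is an isometry `(E, v) → (E, w)` and hence
extends uniquely to a continuous map `ψ_σ : E_v → E_w` between the completions; here the
family `Ψ` of these extensions is characterized by being continuous in the second variable
and agreeing with `σ` on the dense image of `E`.  Then `ψ(σ, α) = ψ_σ(α)` is continuous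
as a map `S × E_v → E_w`. -/
theorem sContinuity {F E : Type*} [Field F] [Field E] [Algebra F E]
    [Algebra.IsAlgebraic F E] [IsGalois F E]
    (v w : AbsoluteValue E ℝ)
    (Ψ : {σ : E ≃ₐ[F] E // ∀ x : E, w (σ x) = v x} → v.Completion → w.Completion)
    (hΨcont : ∀ σ, Continuous (Ψ σ))
    (hΨext : ∀ σ (x : E),
      Ψ σ (((WithAbs.equiv v).symm x : WithAbs v) : v.Completion)
        = (((WithAbs.equiv w).symm (σ.1 x) : WithAbs w) : w.Completion)) :
    Continuous fun p : {σ : E ≃ₐ[F] E // ∀ x : E, w (σ x) = v x} × v.Completion =>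
      Ψ p.1 p.2 :=
  sContinuity_general v w Ψ hΨcont hΨext
end

section
/- Let G be a compact Hausdorff topological group acting continuously and transitively on a nonempty Hausdorff topological space Y, and let (H_i)_{i ∈ ℕ} be a decreasing sequence of closed normal subgroups of G with H_0 = G. Then there exists a map λ : Y × Y → G satisfying: (i) λ(x, x) = 1 for all x ∈ Y; (ii) λ(x, y) • x = y for all x, y ∈ Y; (iii) λ(y, z) λ(x, y) = λ(x, z) for all x, y, z ∈ Y; (iv) for every i ∈ ℕ, if x and y lie in the same H_i-orbit of Y, then λ(x, y) ∈ H_i. -/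
/-!
Fix `x₀ : Y`. By recursion on `n`, attach to every `H n`-orbit `c` an element `t n c` of `G`
moving `x₀` to a chosen point of `c`, such that `t (n + 1) c` lies in the right coset
`H n * t n c'`, where `c'` is the `H n`-orbit containing `c`. For `y : Y` the sets
`{g ∈ H n * t n [y] | g • x₀ = y}` are then nested, nonempty and closed in the compact group `G`,
so they have a common point `f y`, and `λ (x, y) = f y * (f x)⁻¹` works.
-/

open MulAction

namespace OrbitTower

variable {G Y : Type*} [Group G] [MulAction G Y]

theorem mem_orbit_subgroup_iff {K : Subgroup G} {a b : Y} :
    b ∈ orbit K a ↔ ∃ h ∈ K, h • a = b := by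
  simp [mem_orbit_iff, Subgroup.smul_def]

theorem orbitRel_mono {K L : Subgroup G} (hKL : K ≤ L) : orbitRel K Y ≤ orbitRel L Y := by
  intro a b hab
  obtain ⟨h, hK, rfl⟩ := mem_orbit_subgroup_iff.mp hab
  exact mem_orbit_subgroup_iff.mpr ⟨h, hKL hK, rfl⟩

theorem mul_inv_mem_of_mul_inv_mem {K : Subgroup G} {a b c : G} (ha : a * c⁻¹ ∈ K)
    (hb : b * c⁻¹ ∈ K) : a * b⁻¹ ∈ K := by
  simpa [mul_assoc] using mul_mem ha (inv_mem hb)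

theorem exists_smul_eq_forall_mul_inv_mem [TopologicalSpace G] [ContinuousMul G]
    [CompactSpace G] [TopologicalSpace Y] [T1Space Y] [ContinuousSMul G Y] {H : ℕ → Subgroup G}
    (hclosed : ∀ n, IsClosed (H n : Set G)) (hdec : ∀ n, H (n + 1) ≤ H n) {x₀ y : Y}
    (g : ℕ → G) (hg : ∀ n, g (n + 1) * (g n)⁻¹ ∈ H n)
    (hy : ∀ n, ∃ h ∈ H n, h • g n • x₀ = y) :
    ∃ f : G, f • x₀ = y ∧ ∀ n, f * (g n)⁻¹ ∈ H n := by
  set B : ℕ → Set G := fun n => {f | f * (g n)⁻¹ ∈ H n ∧ f • x₀ = y}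
  have hB_closed (n : ℕ) : IsClosed (B n) :=
    ((hclosed n).preimage (continuous_mul_const _)).inter
      (isClosed_singleton.preimage (continuous_id.smul continuous_const))
  have hB_nonempty (n : ℕ) : (B n).Nonempty := by
    obtain ⟨h, hh, hy⟩ := hy n
    exact ⟨h * g n, by simpa using hh, by rwa [mul_smul]⟩
  have hB_succ (n : ℕ) : B (n + 1) ⊆ B n := fun f ⟨hf, hfy⟩ =>
    ⟨by simpa [mul_assoc] using mul_mem (hdec n hf) (hg n), hfy⟩
  obtain ⟨f, hf⟩ := IsCompact.nonempty_iInter_of_sequence_nonempty_isCompact_isClosed B hB_succ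
    hB_nonempty (hB_closed 0).isCompact hB_closed
  rw [Set.mem_iInter] at hf
  exact ⟨f, (hf 0).2, fun n => (hf n).1⟩

variable (H : ℕ → Subgroup G)

noncomputable def coarsen (n : ℕ) (c : Quotient (orbitRel (H (n + 1)) Y)) :
    Quotient (orbitRel (H n) Y) :=
  Quotient.mk _ c.out

theorem coarsen_mk (hdec : ∀ n, H (n + 1) ≤ H n) (n : ℕ) (y : Y) :
    coarsen H n (Quotient.mk _ y) = Quotient.mk _ y :=
  Quotient.sound (orbitRel_mono (hdec n) (Quotient.mk_out y))

theorem exists_smul_out_coarsen (n : ℕ) (c : Quotient (orbitRel (H (n + 1)) Y)) :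
    ∃ h ∈ H n, h • (coarsen H n c).out = c.out :=
  mem_orbit_subgroup_iff.mp
    (mem_orbit_symm.mp (Quotient.mk_out (s := orbitRel (H n) Y) c.out))

noncomputable def coarsenStep (n : ℕ) (c : Quotient (orbitRel (H (n + 1)) Y)) : G :=
  (exists_smul_out_coarsen H n c).choose

theorem coarsenStep_mem (n : ℕ) (c : Quotient (orbitRel (H (n + 1)) Y)) :
    coarsenStep H n c ∈ H n :=
  (exists_smul_out_coarsen H n c).choose_spec.1

theorem coarsenStep_smul (n : ℕ) (c : Quotient (orbitRel (H (n + 1)) Y)) :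
    coarsenStep H n c • (coarsen H n c).out = c.out :=
  (exists_smul_out_coarsen H n c).choose_spec.2

variable [IsPretransitive G Y] (x₀ : Y)

noncomputable def transporter : (n : ℕ) → Quotient (orbitRel (H n) Y) → G
  | 0, c => (exists_smul_eq G x₀ c.out).choose
  | n + 1, c => coarsenStep H n c * transporter n (coarsen H n c)

theorem transporter_smul : ∀ (n : ℕ) (c : Quotient (orbitRel (H n) Y)),
    transporter H x₀ n c • x₀ = c.out
  | 0, c => (exists_smul_eq G x₀ c.out).choose_spec
  | n + 1, c => by
    rw [transporter, mul_smul, transporter_smul n, coarsenStep_smul]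

theorem transporter_succ_mul_inv_mem (n : ℕ) (c : Quotient (orbitRel (H (n + 1)) Y)) :
    transporter H x₀ (n + 1) c * (transporter H x₀ n (coarsen H n c))⁻¹ ∈ H n := by
  simpa [transporter] using coarsenStep_mem H n c

theorem exists_section_mul_inv_mem_of_mem_orbit [TopologicalSpace G] [ContinuousMul G]
    [CompactSpace G] [TopologicalSpace Y] [T1Space Y] [ContinuousSMul G Y]
    (hclosed : ∀ n, IsClosed (H n : Set G)) (hdec : ∀ n, H (n + 1) ≤ H n) :
    ∃ f : Y → G, (∀ y, f y • x₀ = y) ∧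
      ∀ n x y, (∃ h ∈ H n, h • x = y) → f y * (f x)⁻¹ ∈ H n := by
  have key (y : Y) : ∃ f : G, f • x₀ = y ∧
      ∀ n, f * (transporter H x₀ n (Quotient.mk _ y))⁻¹ ∈ H n := by
    refine exists_smul_eq_forall_mul_inv_mem hclosed hdec _ (fun n => ?_) (fun n => ?_)
    · simpa only [coarsen_mk H hdec] using
        transporter_succ_mul_inv_mem H x₀ n (Quotient.mk _ y)
    · rw [transporter_smul]
      exact mem_orbit_subgroup_iff.mp
        (mem_orbit_symm.mp (Quotient.mk_out (s := orbitRel (H n) Y) y))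
  choose f hf_smul hf_mem using key
  refine ⟨f, hf_smul, fun n x y hxy => ?_⟩
  have hxy : (Quotient.mk _ x : Quotient (orbitRel (H n) Y)) = Quotient.mk _ y :=
    Quotient.sound (mem_orbit_symm.mp (mem_orbit_subgroup_iff.mpr hxy))
  exact mul_inv_mem_of_mul_inv_mem (hf_mem y n) (hxy ▸ hf_mem x n)

end OrbitTower

open OrbitTower in
theorem betterNumberFieldStack_general {G Y : Type*} [Group G] [TopologicalSpace G]
    [IsTopologicalGroup G] [CompactSpace G]
    [TopologicalSpace Y] [T2Space Y] [Nonempty Y]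
    [MulAction G Y] [ContinuousSMul G Y] [MulAction.IsPretransitive G Y]
    (H : ℕ → Subgroup G)
    (hclosed : ∀ i, IsClosed (H i : Set G))
    (hdec : ∀ i, H (i + 1) ≤ H i) :
    ∃ lam : Y × Y → G,
      (∀ x : Y, lam (x, x) = 1) ∧
      (∀ x y : Y, lam (x, y) • x = y) ∧
      (∀ x y z : Y, lam (y, z) * lam (x, y) = lam (x, z)) ∧
      (∀ (i : ℕ) (x y : Y), (∃ h ∈ H i, h • x = y) → lam (x, y) ∈ H i) := by
  obtain ⟨x₀⟩ := ‹Nonempty Y›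
  obtain ⟨f, hf_smul, hf_mem⟩ := exists_section_mul_inv_mem_of_mem_orbit H x₀ hclosed hdec
  refine ⟨fun p => f p.2 * (f p.1)⁻¹, fun x => mul_inv_cancel (f x), fun x y => ?_,
    fun x y z => by simp [mul_assoc], hf_mem⟩
  rw [mul_smul, inv_smul_eq_iff.mpr (hf_smul x).symm, hf_smul]

/-- Lemma `BetterNumberFieldStack`, abstract form: Let `G` be a compact
Hausdorff topological group acting continuously and transitively on a nonempty Hausdorff
space `Y`, and let `(H i)` be a decreasing sequence of closed normal subgroups of `G`
with `H 0 = G`.  Then there is a map `lam : Y × Y → G` with `lam (x, x) = 1`,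
`lam (x, y) • x = y`, `lam (y, z) * lam (x, y) = lam (x, z)`, and such that whenever
`x` and `y` lie in the same `H i`-orbit, `lam (x, y) ∈ H i`. -/
theorem betterNumberFieldStack {G Y : Type*} [Group G] [TopologicalSpace G]
    [IsTopologicalGroup G] [CompactSpace G] [T2Space G]
    [TopologicalSpace Y] [T2Space Y] [Nonempty Y]
    [MulAction G Y] [ContinuousSMul G Y] [MulAction.IsPretransitive G Y]
    (H : ℕ → Subgroup G) (hnormal : ∀ i, (H i).Normal)
    (hclosed : ∀ i, IsClosed (H i : Set G))
    (hdec : ∀ i, H (i + 1) ≤ H i) (h0 : H 0 = ⊤) :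
    ∃ lam : Y × Y → G,
      (∀ x : Y, lam (x, x) = 1) ∧
      (∀ x y : Y, lam (x, y) • x = y) ∧
      (∀ x y z : Y, lam (y, z) * lam (x, y) = lam (x, z)) ∧
      (∀ (i : ℕ) (x y : Y), (∃ h ∈ H i, h • x = y) → lam (x, y) ∈ H i) :=
  betterNumberFieldStack_general H hclosed hdec
end

section
/- Let G be a topological group in which the open normal subgroups form a neighborhood basis of the identity, and let Y be a topological space. Let λ : Y × Y → G be a map satisfying λ(x, x) = 1 for all x ∈ Y and λ(y, z) λ(x, y) = λ(x, z) for all x, y, z ∈ Y. Suppose that for every open normal subgroup H of G and every x ∈ Y there exists an open neighborhood U of x such that λ(U × U) ⊆ H. Then λ is continuous. -/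
open Filter Topology

section ContinuityCriterion

variable {G X : Type*} [Group G] [TopologicalSpace G] [IsTopologicalGroup G] [TopologicalSpace X]

theorem continuousAt_of_eventually_mul_inv_mem
    (hbasis : ∀ U ∈ 𝓝 (1 : G), ∃ H : Subgroup G, H.Normal ∧ IsOpen (H : Set G) ∧
      (H : Set G) ⊆ U)
    {f : X → G} {a : X}
    (h : ∀ H : Subgroup G, H.Normal → IsOpen (H : Set G) → ∀ᶠ z in 𝓝 a, f z * (f a)⁻¹ ∈ H) :
    ContinuousAt f a := by
  intro W hW
  have hW₁ : (· * f a) ⁻¹' W ∈ 𝓝 (1 : G) :=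
    (continuous_mul_const (f a)).continuousAt.preimage_mem_nhds (by rwa [one_mul])
  obtain ⟨H, hN, hO, hHW⟩ := hbasis _ hW₁
  rw [mem_map]
  filter_upwards [h H hN hO] with z hz
  simpa using hHW hz

end ContinuityCriterion

section Cocycle

variable {G Y : Type*} [Group G] {lam : Y × Y → G}

theorem cocycle_mul_inv_eq (hcoc : ∀ x y z : Y, lam (y, z) * lam (x, y) = lam (x, z))
    (x y x₀ y₀ : Y) :
    lam (x₀, y₀) * (lam (x, y))⁻¹ =
      lam (y, y₀) * (lam (x, y) * lam (x₀, x) * (lam (x, y))⁻¹) := by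
  rw [← hcoc x₀ y y₀, ← hcoc x₀ x y]
  group

theorem cocycle_mul_inv_mem (hcoc : ∀ x y z : Y, lam (y, z) * lam (x, y) = lam (x, z))
    {H : Subgroup G} (hN : H.Normal) {x y x₀ y₀ : Y}
    (hx : lam (x₀, x) ∈ H) (hy : lam (y, y₀) ∈ H) :
    lam (x₀, y₀) * (lam (x, y))⁻¹ ∈ H := by
  rw [cocycle_mul_inv_eq hcoc]
  exact H.mul_mem hy (hN.conj_mem _ hx _)

end Cocycle

theorem transitionContinuity_general {G Y : Type*} [Group G] [TopologicalSpace G]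
    [IsTopologicalGroup G] [TopologicalSpace Y]
    (hbasis : ∀ U ∈ nhds (1 : G), ∃ H : Subgroup G, H.Normal ∧ IsOpen (H : Set G) ∧
      (H : Set G) ⊆ U)
    (lam : Y × Y → G)
    (hcoc : ∀ x y z : Y, lam (y, z) * lam (x, y) = lam (x, z))
    (hloc : ∀ H : Subgroup G, H.Normal → IsOpen (H : Set G) → ∀ x : Y,
      ∃ U : Set Y, IsOpen U ∧ x ∈ U ∧ ∀ x₀ ∈ U, ∀ y₀ ∈ U, lam (x₀, y₀) ∈ H) :
    Continuous lam := by
  refine continuous_iff_continuousAt.2 fun ⟨x, y⟩ ↦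
    continuousAt_of_eventually_mul_inv_mem hbasis fun H hN hO ↦ ?_
  obtain ⟨U, hUo, hxU, hU⟩ := hloc H hN hO x
  obtain ⟨V, hVo, hyV, hV⟩ := hloc H hN hO y
  filter_upwards [prod_mem_nhds (hUo.mem_nhds hxU) (hVo.mem_nhds hyV)] with ⟨x₀, y₀⟩ ⟨hx₀, hy₀⟩
  exact cocycle_mul_inv_mem hcoc hN (hU x₀ hx₀ x hxU) (hV y hyV y₀ hy₀)

/-- Let `G` be a topological group in which the open normal subgroups form
a neighborhood basis of the identity, `Y` a topological space, and `lam : Y × Y → G` a map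
with `lam (x, x) = 1` and `lam (y, z) * lam (x, y) = lam (x, z)`.  If for every open normal
subgroup `H` of `G` and every `x ∈ Y` there is an open neighborhood `U` of `x` with
`lam (U × U) ⊆ H`, then `lam` is continuous. -/
theorem transitionContinuity {G Y : Type*} [Group G] [TopologicalSpace G]
    [IsTopologicalGroup G] [TopologicalSpace Y]
    (hbasis : ∀ U ∈ nhds (1 : G), ∃ H : Subgroup G, H.Normal ∧ IsOpen (H : Set G) ∧
      (H : Set G) ⊆ U)
    (lam : Y × Y → G)
    (hid : ∀ x : Y, lam (x, x) = 1)
    (hcoc : ∀ x y z : Y, lam (y, z) * lam (x, y) = lam (x, z))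
    (hloc : ∀ H : Subgroup G, H.Normal → IsOpen (H : Set G) → ∀ x : Y,
      ∃ U : Set Y, IsOpen U ∧ x ∈ U ∧ ∀ x₀ ∈ U, ∀ y₀ ∈ U, lam (x₀, y₀) ∈ H) :
    Continuous lam :=
  transitionContinuity_general hbasis lam hcoc hloc
end

section
/- Let G be a compact Hausdorff topological group acting continuously and transitively on a nonempty Hausdorff topological space Y. Let (H_i)_{i ∈ ℕ} be a decreasing sequence of open normal subgroups of G with H_0 = G which forms a neighborhood basis of the identity of G, and suppose that for every i ∈ ℕ every H_i-orbit in Y is open in Y. Then there exists a continuous map λ : Y × Y → G satisfying: (i) λ(x, x) = 1 for all x ∈ Y; (ii) λ(x, y) • x = y for all x, y ∈ Y; (iii) λ(y, z) λ(x, y) = λ(x, z) for all x, y, z ∈ Y. -/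
/-!
Fix `x₀ : Y`. Call `s : Y → G` a section modulo a subgroup `K` if it is constant on `K`-orbits
and `s x • x₀` lies in the `K`-orbit of `x`. Choosing orbit representatives, a section modulo
`H i` can be corrected by left factors in `H i` to a section modulo `H (i + 1)`, which gives
sections `s i` with `s (i + 1) x ∈ H i * s i x`. By compactness the nested closed cosets
`H i * s i x` have a common point `S x`. Since the `H i` shrink to `1`, `S x • x₀ = x`; since
`S` is constant modulo `H i` on the open `H i`-orbits, `S` is continuous. Then
`lam (x, y) = S y * (S x)⁻¹`.
-/

open MulAction Filter Topology

theorem exists_seq_of_exists_succ {α : Type*} {P : ℕ → α → Prop} {R : ℕ → α → α → Prop}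
    (h₀ : ∃ a, P 0 a) (hsucc : ∀ i a, P i a → ∃ b, P (i + 1) b ∧ R i a b) :
    ∃ f : ℕ → α, ∀ i, P i (f i) ∧ R i (f i) (f (i + 1)) := by
  choose next hnext using hsucc
  let f : ∀ i, {a // P i a} := fun i =>
    Nat.rec ⟨h₀.choose, h₀.choose_spec⟩ (fun i a => ⟨next i a a.2, (hnext i a a.2).1⟩) i
  exact ⟨fun i => (f i).1, fun i => ⟨(f i).2, (hnext i _ (f i).2).2⟩⟩

section Orbits

variable {G Y : Type*} [Group G] [MulAction G Y]

theorem Subgroup.orbit_eq_setOf (K : Subgroup G) (x : Y) :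
    orbit K x = {y | ∃ h ∈ K, h • x = y} := by
  ext y
  simp [mem_orbit_iff, Subgroup.smul_def]

theorem Subgroup.mem_orbit_of_le {K K' : Subgroup G} (hle : K' ≤ K) {x y : Y}
    (h : y ∈ orbit K' x) : y ∈ orbit K x := by
  obtain ⟨⟨g, hg⟩, rfl⟩ := h
  exact ⟨⟨g, hle hg⟩, rfl⟩

structure IsSectionMod (K : Subgroup G) (x₀ : Y) (s : Y → G) : Prop where
  eq_of_mem_orbit : ∀ ⦃x y⦄, y ∈ orbit K x → s y = s x
  mem_orbit_smul : ∀ x, x ∈ orbit K (s x • x₀)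

theorem isSectionMod_top_one [IsPretransitive G Y] (x₀ : Y) :
    IsSectionMod (⊤ : Subgroup G) x₀ 1 where
  eq_of_mem_orbit _ _ _ := rfl
  mem_orbit_smul x := by
    obtain ⟨g, hg⟩ := exists_smul_eq G x₀ x
    exact ⟨⟨g, Subgroup.mem_top g⟩, by simpa [Subgroup.smul_def] using hg⟩

theorem IsSectionMod.exists_refine {K K' : Subgroup G} {x₀ : Y} {s : Y → G}
    (hs : IsSectionMod K x₀ s) (hle : K' ≤ K) :
    ∃ s' : Y → G, IsSectionMod K' x₀ s' ∧ ∀ x, s' x * (s x)⁻¹ ∈ K := by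
  let r : Y → Y := fun x => (Quotient.mk'' x : orbitRel.Quotient K' Y).out
  have hr : ∀ x, r x ∈ orbit K' x := fun x => orbitRel_apply.mp (Quotient.mk_out' x)
  have hr_eq : ∀ ⦃x y⦄, y ∈ orbit K' x → r y = r x := fun _ _ h =>
    congrArg Quotient.out (Quotient.sound h)
  have hsr : ∀ x, s (r x) = s x := fun x =>
    hs.eq_of_mem_orbit (Subgroup.mem_orbit_of_le hle (hr x))
  choose g hg using hs.mem_orbit_smul
  refine ⟨fun x => g (r x) * s (r x), ⟨fun x y h => ?_, fun x => ?_⟩, fun x => ?_⟩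
  · simp only [hr_eq h]
  · have hgr : ((g (r x) : G) * s (r x)) • x₀ = r x := by rw [mul_smul]; exact hg (r x)
    rw [hgr]
    exact mem_orbit_symm.mp (hr x)
  · simp only [hsr, mul_inv_cancel_right]
    exact (g (r x)).2

theorem exists_seq_isSectionMod [IsPretransitive G Y] {H : ℕ → Subgroup G}
    (hdec : ∀ i, H (i + 1) ≤ H i) (h0 : H 0 = ⊤) (x₀ : Y) :
    ∃ s : ℕ → Y → G, ∀ i, IsSectionMod (H i) x₀ (s i) ∧ ∀ x, s (i + 1) x * (s i x)⁻¹ ∈ H i :=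
  exists_seq_of_exists_succ (P := fun i => IsSectionMod (H i) x₀)
    (R := fun i s s' => ∀ x, s' x * (s x)⁻¹ ∈ H i) ⟨1, h0 ▸ isSectionMod_top_one x₀⟩
    fun i _ hs => hs.exists_refine (hdec i)

end Orbits

section Topology

variable {G Y : Type*} [Group G] [TopologicalSpace G]

theorem exists_forall_mul_inv_mem [ContinuousMul G] [CompactSpace G] {H : ℕ → Subgroup G}
    (hclosed : ∀ i, IsClosed (H i : Set G)) (hdec : ∀ i, H (i + 1) ≤ H i) {g : ℕ → G}
    (hg : ∀ i, g (i + 1) * (g i)⁻¹ ∈ H i) : ∃ a, ∀ i, a * (g i)⁻¹ ∈ H i := by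
  let C : ℕ → Set G := fun i => (· * (g i)⁻¹) ⁻¹' H i
  have hC_closed : ∀ i, IsClosed (C i) := fun i =>
    (hclosed i).preimage (continuous_mul_const _)
  have hC_anti : ∀ i, C (i + 1) ⊆ C i := fun i a ha => by
    simpa [C, mul_assoc] using (H i).mul_mem (hdec i ha) (hg i)
  have hC_ne : ∀ i, (C i).Nonempty := fun i => ⟨g i, by simp [C, (H i).one_mem]⟩
  obtain ⟨a, ha⟩ := IsCompact.nonempty_iInter_of_sequence_nonempty_isCompact_isClosed C hC_anti
    hC_ne (hC_closed 0).isCompact hC_closed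
  exact ⟨a, Set.mem_iInter.mp ha⟩

theorem tendsto_one_of_forall_mem {H : ℕ → Subgroup G} (hdec : ∀ i, H (i + 1) ≤ H i)
    (hbasis : ∀ U ∈ 𝓝 (1 : G), ∃ i, (H i : Set G) ⊆ U) {g : ℕ → G} (hg : ∀ i, g i ∈ H i) :
    Tendsto g atTop (𝓝 1) := fun U hU => by
  obtain ⟨i, hi⟩ := hbasis U hU
  exact mem_atTop_sets.2 ⟨i, fun j hj => hi (antitone_nat_of_succ_le hdec hj (hg j))⟩

variable [MulAction G Y] [TopologicalSpace Y]

theorem eq_of_forall_mem_orbit [ContinuousSMul G Y] [T1Space Y] {H : ℕ → Subgroup G}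
    (hdec : ∀ i, H (i + 1) ≤ H i) (hbasis : ∀ U ∈ 𝓝 (1 : G), ∃ i, (H i : Set G) ⊆ U)
    {x y : Y} (h : ∀ i, y ∈ orbit (H i) x) : y = x := by
  choose g hg using h
  have := ((tendsto_one_of_forall_mem hdec hbasis fun i => (g i).2).smul_const x)
  simp_rw [← Subgroup.smul_def, hg, one_smul] at this
  exact tendsto_const_nhds_iff.mp this

theorem continuous_of_forall_mem_orbit [ContinuousMul G] {H : ℕ → Subgroup G}
    (hbasis : ∀ U ∈ 𝓝 (1 : G), ∃ i, (H i : Set G) ⊆ U)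
    (horbit : ∀ i (x : Y), IsOpen (orbit (H i) x)) {S : Y → G}
    (hS : ∀ i x y, y ∈ orbit (H i) x → S y * (S x)⁻¹ ∈ H i) : Continuous S := by
  refine continuous_iff_continuousAt.2 fun x U hU => ?_
  obtain ⟨i, hi⟩ := hbasis _ ((continuous_mul_const (S x)).tendsto' 1 (S x) (one_mul _) hU)
  exact mem_map.2 <| mem_of_superset ((horbit i x).mem_nhds (mem_orbit_self x)) fun y hy => by
    simpa using hi (hS i x y hy)

theorem exists_continuous_section [ContinuousMul G] [CompactSpace G] [ContinuousSMul G Y]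
    [T1Space Y] [IsPretransitive G Y] {H : ℕ → Subgroup G}
    (hclosed : ∀ i, IsClosed (H i : Set G)) (hdec : ∀ i, H (i + 1) ≤ H i) (h0 : H 0 = ⊤)
    (hbasis : ∀ U ∈ 𝓝 (1 : G), ∃ i, (H i : Set G) ⊆ U)
    (horbit : ∀ i (x : Y), IsOpen (orbit (H i) x)) (x₀ : Y) :
    ∃ S : Y → G, Continuous S ∧ ∀ x, S x • x₀ = x := by
  obtain ⟨s, hs⟩ := exists_seq_isSectionMod hdec h0 x₀
  choose S hS using fun x =>
    exists_forall_mul_inv_mem (g := fun i => s i x) hclosed hdec fun i => (hs i).2 x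
  refine ⟨S, continuous_of_forall_mem_orbit hbasis horbit fun i x y hy => ?_,
    fun x => (eq_of_forall_mem_orbit hdec hbasis fun i => ?_).symm⟩
  · have hsy : s i y = s i x := (hs i).1.eq_of_mem_orbit hy
    have := (H i).mul_mem (hS y i) ((H i).inv_mem (hS x i))
    rwa [hsy, mul_inv_rev, inv_inv, mul_assoc, inv_mul_cancel_left] at this
  · have hS_smul : S x • x₀ = (⟨_, hS x i⟩ : H i) • (s i x • x₀) := by
      rw [Subgroup.smul_def, ← mul_smul, inv_mul_cancel_right]
    rw [hS_smul, orbit_smul]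
    exact (hs i).1.mem_orbit_smul x

end Topology

theorem transitionExistence_general {G Y : Type*} [Group G] [TopologicalSpace G]
    [IsTopologicalGroup G] [CompactSpace G]
    [TopologicalSpace Y] [T2Space Y] [Nonempty Y]
    [MulAction G Y] [ContinuousSMul G Y] [MulAction.IsPretransitive G Y]
    (H : ℕ → Subgroup G)
    (hopen : ∀ i, IsOpen (H i : Set G))
    (hdec : ∀ i, H (i + 1) ≤ H i) (h0 : H 0 = ⊤)
    (hbasis : ∀ U ∈ nhds (1 : G), ∃ i : ℕ, (H i : Set G) ⊆ U)
    (horbit : ∀ (i : ℕ) (x : Y), IsOpen {y : Y | ∃ h ∈ H i, h • x = y}) :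
    ∃ lam : Y × Y → G, Continuous lam ∧
      (∀ x : Y, lam (x, x) = 1) ∧
      (∀ x y : Y, lam (x, y) • x = y) ∧
      (∀ x y z : Y, lam (y, z) * lam (x, y) = lam (x, z)) := by
  obtain ⟨x₀⟩ := ‹Nonempty Y›
  obtain ⟨S, hS_cont, hS⟩ := exists_continuous_section
    (fun i => (H i).isClosed_of_isOpen (hopen i)) hdec h0 hbasis
    (fun i x => (H i).orbit_eq_setOf x ▸ horbit i x) x₀
  refine ⟨fun p => S p.2 * (S p.1)⁻¹, by fun_prop, fun x => mul_inv_cancel _,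
    fun x y => ?_, fun x y z => by group⟩
  show (S y * (S x)⁻¹) • x = y
  rw [mul_smul, inv_smul_eq_iff.mpr (hS x).symm, hS]

/-- Theorem `TransitionExistence`, abstract form: Let `G` be a compact
Hausdorff topological group acting continuously and transitively on a nonempty Hausdorff
space `Y`.  Let `(H i)` be a decreasing sequence of open normal subgroups of `G` with
`H 0 = G` forming a neighborhood basis of the identity, and suppose every `H i`-orbit in
`Y` is open.  Then there exists a continuous map `lam : Y × Y → G` with `lam (x, x) = 1`,
`lam (x, y) • x = y`, and `lam (y, z) * lam (x, y) = lam (x, z)`. -/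
theorem transitionExistence {G Y : Type*} [Group G] [TopologicalSpace G]
    [IsTopologicalGroup G] [CompactSpace G] [T2Space G]
    [TopologicalSpace Y] [T2Space Y] [Nonempty Y]
    [MulAction G Y] [ContinuousSMul G Y] [MulAction.IsPretransitive G Y]
    (H : ℕ → Subgroup G) (hnormal : ∀ i, (H i).Normal)
    (hopen : ∀ i, IsOpen (H i : Set G))
    (hdec : ∀ i, H (i + 1) ≤ H i) (h0 : H 0 = ⊤)
    (hbasis : ∀ U ∈ nhds (1 : G), ∃ i : ℕ, (H i : Set G) ⊆ U)
    (horbit : ∀ (i : ℕ) (x : Y), IsOpen {y : Y | ∃ h ∈ H i, h • x = y}) :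
    ∃ lam : Y × Y → G, Continuous lam ∧
      (∀ x : Y, lam (x, x) = 1) ∧
      (∀ x y : Y, lam (x, y) • x = y) ∧
      (∀ x y z : Y, lam (y, z) * lam (x, y) = lam (x, z)) :=
  transitionExistence_general H hopen hdec h0 hbasis horbit
end
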